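/- Let A ⊆ ℕ₀ be a finite 3-free set, S(A) the Stanley sequence generated by A, and S(A,x) its counting function. Then for every real x ≥ 0, x ≤ S(A,x)(S(A,x) + 1)/2 + max A. -/

import Mathlib

/-
Past `max A` the greedy rule rejects `n` only when some `a < b` already in `S(A)` satisfy
`a + n = 2b`. So every `n` with `max A ≤ n ≤ x` is `2b - a` for a pair `a ≤ b` of elements of
`S(A)` up to `x` (take `a = b = n` when `n ∈ S(A)`). With `k = S(A,x)` there are `k(k+1)/2` such
pairs, whence `⌊x⌋ + 1 - max A ≤ k(k+1)/2`.
-/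

/-- A set of nonnegative integers is 3-free if it contains no three-term
arithmetic progression `a < b < c` with `a + c = 2b`. -/
def ThreeFree (S : Set ℕ) : Prop :=
  ∀ a ∈ S, ∀ b ∈ S, ∀ c ∈ S, a < b → b < c → a + c ≠ 2 * b

/-- `stanleyBelow A n` is the set of elements of the Stanley sequence generated by `A`
that are smaller than `n`: at stage `n` we include `n` itself if `n ∈ A`, or if `n`
exceeds every element of `A` and adjoining `n` to everything chosen so far stays 3-free
(the greedy rule). -/
def stanleyBelow (A : Finset ℕ) : ℕ → Set ℕ
  | 0 => ∅
  | n + 1 => stanleyBelow A n ∪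
      {m | m = n ∧ (n ∈ A ∨ ((∀ a ∈ A, a < n) ∧ ThreeFree (stanleyBelow A n ∪ {n})))}

/-- The Stanley sequence `S(A)` generated by `A`, as a set of nonnegative integers. -/
def stanley (A : Finset ℕ) : Set ℕ := ⋃ n, stanleyBelow A n

/-- The counting function `S(A,x) = #{s ∈ S(A) : s ≤ x}`. -/
noncomputable def stanleyCount (A : Finset ℕ) (x : ℝ) : ℕ :=
  Nat.card {s : ℕ | s ∈ stanley A ∧ (s : ℝ) ≤ x}

/-- `H S n = #{(s₁,s₂) : s₁,s₂ ∈ S, s₁ < s₂, n = 2s₂ - s₁}`. -/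
noncomputable def H (S : Set ℕ) (n : ℕ) : ℕ :=
  Nat.card {p : ℕ × ℕ | p.1 ∈ S ∧ p.2 ∈ S ∧ p.1 < p.2 ∧ n + p.1 = 2 * p.2}

lemma card_le_choose_of_forall_exists_add_eq_two_mul {S T : Finset ℕ}
    (h : ∀ n ∈ T, ∃ a ∈ S, ∃ b ∈ S, a ≤ b ∧ a + n = 2 * b) :
    T.card ≤ (S.card + 1).choose 2 := by
  have hT : T ⊆ S.sym2.image fun z => 2 * z.sup - z.inf := by
    intro n hn
    obtain ⟨a, ha, b, hb, hab, hn⟩ := h n hn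
    exact Finset.mem_image.mpr ⟨s(a, b), Finset.mk_mem_sym2_iff.mpr ⟨ha, hb⟩, by
      rw [Sym2.sup_mk, Sym2.inf_mk, sup_of_le_right hab, inf_of_le_left hab]; omega⟩
  calc T.card ≤ _ := Finset.card_le_card hT
    _ ≤ S.sym2.card := Finset.card_image_le
    _ = (S.card + 1).choose 2 := Finset.card_sym2 S

lemma ThreeFree.mono {S T : Set ℕ} (hT : ThreeFree T) (h : S ⊆ T) : ThreeFree S :=
  fun a ha b hb c hc => hT a (h ha) b (h hb) c (h hc)

lemma ThreeFree.exists_add_eq_two_mul {S : Set ℕ} {n : ℕ} (hS : ThreeFree S)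
    (hlt : ∀ m ∈ S, m < n) (h : ¬ ThreeFree (S ∪ {n})) :
    ∃ a ∈ S, ∃ b ∈ S, a < b ∧ a + n = 2 * b := by
  simp only [ThreeFree, not_forall, Set.union_singleton, Set.mem_insert_iff] at h
  obtain ⟨a, ha, b, hb, c, hc, hab, hbc, habc⟩ := h
  -- `n` exceeds all of `S`, so it can only be the largest term `c` of the progression.
  have hbelow : ∀ {m}, m = n ∨ m ∈ S → m < c → m ∈ S := by
    rintro m (rfl | hm) hmc
    · rcases hc with rfl | hc
      · omega
      · exact absurd (hlt c hc) (by omega)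
    · exact hm
  have ha' := hbelow ha (hab.trans hbc)
  have hb' := hbelow hb hbc
  rcases hc with rfl | hc
  · exact ⟨a, ha', b, hb', hab, by omega⟩
  · exact (habc (hS a ha' b hb' c hc hab hbc)).elim

namespace stanleyBelow

variable {A : Finset ℕ}

lemma lt_of_mem {n m : ℕ} (h : m ∈ stanleyBelow A n) : m < n := by
  induction n with
  | zero => exact absurd h (Set.notMem_empty m)
  | succ n ih =>
    rcases h with h | ⟨rfl, -⟩
    · exact Nat.lt_succ_of_lt (ih h)
    · exact Nat.lt_succ_self _

lemma mem_succ_self_of_mem {n m : ℕ} (h : m ∈ stanleyBelow A n) :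
    m ∈ stanleyBelow A (m + 1) := by
  induction n with
  | zero => exact absurd h (Set.notMem_empty m)
  | succ n ih =>
    rcases h with h | ⟨rfl, h⟩
    · exact ih h
    · exact Or.inr ⟨rfl, h⟩

lemma mem_finset_or_forall_lt_of_mem {n m : ℕ} (h : m ∈ stanleyBelow A n) :
    m ∈ A ∨ ∀ a ∈ A, a < m := by
  induction n with
  | zero => exact absurd h (Set.notMem_empty m)
  | succ n ih =>
    rcases h with h | ⟨rfl, h | h⟩
    · exact ih h
    · exact Or.inl h
    · exact Or.inr h.1

lemma threeFree (hA : ThreeFree ↑A) (n : ℕ) : ThreeFree (stanleyBelow A n) := by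
  induction n with
  | zero => intro a ha; exact absurd ha (Set.notMem_empty a)
  | succ n ih =>
    by_cases hn : n ∈ A ∨ ((∀ a ∈ A, a < n) ∧ ThreeFree (stanleyBelow A n ∪ {n}))
    · have hsucc : stanleyBelow A (n + 1) = stanleyBelow A n ∪ {n} := by
        ext m
        exact ⟨fun h => h.imp id And.left, fun h => h.imp id fun hm => ⟨hm, hn⟩⟩
      rw [hsucc]
      rcases hn with hn | hn
      · refine hA.mono ?_
        rintro m (hm | rfl)
        · exact (mem_finset_or_forall_lt_of_mem hm).resolve_right
            fun h => (lt_of_mem hm).not_gt (h n hn)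
        · exact hn
      · exact hn.2
    · have hsucc : stanleyBelow A (n + 1) = stanleyBelow A n := by
        ext m
        exact ⟨fun h => h.elim id fun hm => absurd hm.2 hn, Or.inl⟩
      rwa [hsucc]

end stanleyBelow

lemma mem_stanley_iff {A : Finset ℕ} {m : ℕ} : m ∈ stanley A ↔ m ∈ stanleyBelow A (m + 1) :=
  ⟨fun h => (Set.mem_iUnion.mp h).elim fun _ => stanleyBelow.mem_succ_self_of_mem,
    fun h => Set.mem_iUnion.mpr ⟨m + 1, h⟩⟩

lemma mem_stanley_of_mem {A : Finset ℕ} {a : ℕ} (ha : a ∈ A) : a ∈ stanley A :=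
  mem_stanley_iff.mpr (Or.inr ⟨rfl, Or.inl ha⟩)

lemma exists_mem_stanley_add_eq_two_mul {A : Finset ℕ} (hA : ThreeFree ↑A) {n : ℕ}
    (hn : ∀ a ∈ A, a ≤ n) :
    ∃ a ∈ stanley A, ∃ b ∈ stanley A, a ≤ b ∧ a + n = 2 * b := by
  by_cases hnS : n ∈ stanley A
  · exact ⟨n, hnS, n, hnS, le_rfl, by omega⟩
  have hlt : ∀ a ∈ A, a < n := fun a ha =>
    (hn a ha).lt_of_ne fun h => hnS (h ▸ mem_stanley_of_mem ha)
  have hblocked : ¬ ThreeFree (stanleyBelow A n ∪ {n}) := fun h =>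
    hnS (mem_stanley_iff.mpr (Or.inr ⟨rfl, Or.inr ⟨hlt, h⟩⟩))
  obtain ⟨a, ha, b, hb, hab, habn⟩ := (stanleyBelow.threeFree hA n).exists_add_eq_two_mul
    (fun _ => stanleyBelow.lt_of_mem) hblocked
  exact ⟨a, Set.mem_iUnion.mpr ⟨n, ha⟩, b, Set.mem_iUnion.mpr ⟨n, hb⟩, hab.le, habn⟩

open Classical in
lemma stanleyCount_eq_card {A : Finset ℕ} {x : ℝ} (hx : 0 ≤ x) :
    stanleyCount A x = ((Finset.range (⌊x⌋₊ + 1)).filter (· ∈ stanley A)).card := by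
  rw [stanleyCount, Nat.card_coe_set_eq, ← Set.ncard_coe_finset]
  congr 1
  ext s
  simp [Nat.le_floor_iff hx, and_comm]

theorem le_count_mul_add_general (A : Finset ℕ) (hA : A.Nonempty)
    (hA3 : ThreeFree ↑A) (x : ℝ) :
    x ≤ (stanleyCount A x : ℝ) * ((stanleyCount A x : ℝ) + 1) / 2 + (A.max' hA : ℝ) := by
  classical
  set M := A.max' hA
  rcases lt_or_ge x M with hxM | hMx
  · have : (0 : ℝ) ≤ (stanleyCount A x : ℝ) * ((stanleyCount A x : ℝ) + 1) / 2 := by positivity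
    linarith
  set N := ⌊x⌋₊
  rw [stanleyCount_eq_card ((Nat.cast_nonneg M).trans hMx)]
  set S := (Finset.range (N + 1)).filter (· ∈ stanley A)
  have hpairs : ∀ n ∈ Finset.Icc M N, ∃ a ∈ S, ∃ b ∈ S, a ≤ b ∧ a + n = 2 * b := by
    intro n hn
    simp only [S, Finset.mem_filter, Finset.mem_range, Finset.mem_Icc] at hn ⊢
    obtain ⟨a, ha, b, hb, hab, habn⟩ :=
      exists_mem_stanley_add_eq_two_mul hA3 fun a ha => (A.le_max' a ha).trans hn.1
    exact ⟨a, ⟨by omega, ha⟩, b, ⟨by omega, hb⟩, hab, habn⟩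
  have hcount := card_le_choose_of_forall_exists_add_eq_two_mul hpairs
  rw [Nat.card_Icc] at hcount
  have hN : (N : ℝ) + 1 ≤ ((S.card + 1).choose 2 : ℕ) + M := by exact_mod_cast (by omega)
  rw [Nat.cast_choose_two, Nat.cast_add_one] at hN
  linarith [Nat.lt_floor_add_one x]

/-- `x ≤ S(A,x)(S(A,x) + 1)/2 + max A`. -/
theorem le_count_mul_add (A : Finset ℕ) (hA : A.Nonempty)
    (hA3 : ThreeFree ↑A) (x : ℝ) (hx : 0 ≤ x) :
    x ≤ (stanleyCount A x : ℝ) * ((stanleyCount A x : ℝ) + 1) / 2 + (A.max' hA : ℝ) :=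
  le_count_mul_add_general A hA hA3 x
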